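/- Let A ⊂ B be a partially cleft H-extension with maps γ, γ': H → B. Then γ * γ' * γ = γ (convolution product), and consequently γ*γ' and γ'*γ are idempotents in the convolution algebra Hom(H,B); moreover γ*γ' is a central idempotent in Hom(H,A). -/

import Mathlib

open TensorProduct

noncomputable section

/-- Convolution product of linear maps `H → B`. -/
def conv {k H B : Type} [CommRing k] [Ring H] [HopfAlgebra k H]
    [Ring B] [Algebra k B] (f g : H →ₗ[k] B) : H →ₗ[k] B :=
  LinearMap.mul' k B ∘ₗ TensorProduct.map f g ∘ₗ
    (Coalgebra.comul : H →ₗ[k] H ⊗[k] H)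

/-- The comultiplication of the tensor product coalgebra `H ⊗ H`. -/
def comulTwo {k H : Type} [CommRing k] [Ring H] [HopfAlgebra k H] :
    H ⊗[k] H →ₗ[k] (H ⊗[k] H) ⊗[k] (H ⊗[k] H) :=
  (TensorProduct.tensorTensorTensorComm k H H H H).toLinearMap ∘ₗ
    TensorProduct.map (Coalgebra.comul (R := k)) (Coalgebra.comul (R := k))

/-- Convolution product in `Hom(H ⊗ H, B)`. -/
def conv2 {k H B : Type} [CommRing k] [Ring H] [HopfAlgebra k H]
    [Ring B] [Algebra k B] (f g : H ⊗[k] H →ₗ[k] B) : H ⊗[k] H →ₗ[k] B :=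
  LinearMap.mul' k B ∘ₗ TensorProduct.map f g ∘ₗ comulTwo

/-- `A = B^{co H} ⊆ B` is a partially cleft `H`-extension via the pair
`(γ, γ')` (Definition 5.1). -/
structure IsPartiallyCleft {k H B : Type} [CommRing k] [Ring H]
    [HopfAlgebra k H] [Ring B] [Algebra k B]
    (ρ : B →ₗ[k] B ⊗[k] H) (γ γ' : H →ₗ[k] B) : Prop where
  /-- (i) `γ(1) = 1` -/
  map_one : γ 1 = 1
  /-- (ii) `γ` is a comodule map -/
  comod : ∀ h : H, ρ (γ h) =
    (TensorProduct.map γ LinearMap.id) (Coalgebra.comul (R := k) h)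
  /-- (ii) `ρ ∘ γ' = (γ' ⊗ S) ∘ Δᶜᵒᵖ` -/
  comod' : ∀ h : H, ρ (γ' h) =
    (TensorProduct.map γ' (HopfAlgebra.antipode (R := k)))
      ((TensorProduct.comm k H H) (Coalgebra.comul (R := k) h))
  /-- `(γ * γ') ∘ M` takes values in the coinvariants -/
  conv_coinv : ∀ h : H, ρ (conv γ γ' h) = conv γ γ' h ⊗ₜ[k] 1
  /-- (iii) `(γ * γ') ∘ M` is central in `Hom(H ⊗ H, A)` -/
  conv_central : ∀ T : H ⊗[k] H →ₗ[k] B, (∀ x, ρ (T x) = T x ⊗ₜ[k] 1) →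
    conv2 (conv γ γ' ∘ₗ LinearMap.mul' k H) T =
      conv2 T (conv γ γ' ∘ₗ LinearMap.mul' k H)
  /-- (iii) each `(γ' * γ)(h)` commutes with the coinvariants -/
  conv'_comm : ∀ (h : H) (a : B), ρ a = a ⊗ₜ[k] 1 →
    conv γ' γ h * a = a * conv γ' γ h
  /-- (iv) `Σ b₀ γ'(b₁) γ(b₂) = b` -/
  expand : ∀ b : B,
    (LinearMap.mul' k B) ((LinearMap.lTensor B (conv γ' γ)) (ρ b)) = b
  /-- (v) `γ(h) e_l = Σ e_{h₁ l} γ(h₂)` -/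
  five : ∀ (h l : H) (ι : Type) (s : Finset ι) (h1 h2 : ι → H),
    Coalgebra.comul (R := k) h = ∑ i ∈ s, h1 i ⊗ₜ[k] h2 i →
    γ h * conv γ γ' l = ∑ i ∈ s, conv γ γ' (h1 i * l) * γ (h2 i)
  /-- (vi) `γ'(l) ẽ_h = Σ ẽ_{h l₁} γ'(l₂)` -/
  six : ∀ (h l : H) (κ : Type) (t : Finset κ) (l1 l2 : κ → H),
    Coalgebra.comul (R := k) l = ∑ j ∈ t, l1 j ⊗ₜ[k] l2 j →
    γ' l * conv γ' γ h = ∑ j ∈ t, conv γ' γ (h * l1 j) * γ' (l2 j)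
  /-- (vii) `Σ γ(h l₁) ẽ_{l₂} = Σ e_{h₁} γ(h₂ l)` -/
  seven : ∀ (h l : H) (ι κ : Type) (s : Finset ι) (t : Finset κ)
    (h1 h2 : ι → H) (l1 l2 : κ → H),
    Coalgebra.comul (R := k) h = ∑ i ∈ s, h1 i ⊗ₜ[k] h2 i →
    Coalgebra.comul (R := k) l = ∑ j ∈ t, l1 j ⊗ₜ[k] l2 j →
    ∑ j ∈ t, γ (h * l1 j) * conv γ' γ (l2 j) =
      ∑ i ∈ s, conv γ γ' (h1 i) * γ (h2 i * l)

/-! Axiom (vii) at `h = 1` reads `γ * γ' * γ = γ`, because `e_1 = γ(1) γ'(1) = 1` by (i) and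
(iv) at `b = 1`. In any semigroup `a b a = a` makes `a b` and `b a` idempotent. Centrality of
`γ * γ'` against a coinvariant-valued `T` is the centrality of `(γ * γ') ∘ M` against `T ∘ M`,
pulled back along the coalgebra map `h ↦ 1 ⊗ h`. -/

open WithConv

theorem IsIdempotentElem.mul_of_mul_mul_eq_left {M : Type*} [Semigroup M] {a b : M}
    (h : a * b * a = a) : IsIdempotentElem (a * b) := by
  rw [IsIdempotentElem, ← mul_assoc, h]

theorem IsIdempotentElem.mul_of_mul_mul_eq_right {M : Type*} [Semigroup M] {a b : M}
    (h : a * b * a = a) : IsIdempotentElem (b * a) := by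
  rw [IsIdempotentElem, mul_assoc, ← mul_assoc a, h]

section Convolution

variable {k H B : Type} [CommRing k] [Ring H] [HopfAlgebra k H] [Ring B] [Algebra k B]

theorem conv_eq_ofConv_mul (f g : H →ₗ[k] B) : conv f g = (toConv f * toConv g).ofConv := rfl

theorem conv_apply_one (f g : H →ₗ[k] B) : conv f g 1 = f 1 * g 1 := by
  simp [conv_eq_ofConv_mul, Bialgebra.comul_one, Algebra.TensorProduct.one_def]

theorem comulTwo_comp_mk_one :
    comulTwo ∘ₗ TensorProduct.mk k H H 1 =
      TensorProduct.map (TensorProduct.mk k H H 1) (TensorProduct.mk k H H 1) ∘ₗ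
        Coalgebra.comul (R := k) := by
  ext h
  obtain ⟨s, l, r, hs⟩ := Coalgebra.Repr.arbitrary k h
  simp [comulTwo, ← hs, Bialgebra.comul_one, Algebra.TensorProduct.one_def, tmul_sum]

theorem conv2_comp_mk_one (F G : H ⊗[k] H →ₗ[k] B) :
    conv2 F G ∘ₗ TensorProduct.mk k H H 1 =
      conv (F ∘ₗ TensorProduct.mk k H H 1) (G ∘ₗ TensorProduct.mk k H H 1) := by
  rw [conv2, LinearMap.comp_assoc, LinearMap.comp_assoc, comulTwo_comp_mk_one, conv,
    TensorProduct.map_comp, LinearMap.comp_assoc]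

theorem comp_mul'_comp_mk_one (f : H →ₗ[k] B) :
    (f ∘ₗ LinearMap.mul' k H) ∘ₗ TensorProduct.mk k H H 1 = f := by
  ext h
  simp

end Convolution

namespace IsPartiallyCleft

variable {k H B : Type} [CommRing k] [Ring H] [HopfAlgebra k H] [Ring B] [Algebra k B]
  {ρ : B →ₗ[k] B ⊗[k] H} {γ γ' : H →ₗ[k] B}

theorem map_one' (hρ_one : ρ 1 = 1 ⊗ₜ[k] 1) (hcleft : IsPartiallyCleft ρ γ γ') : γ' 1 = 1 := by
  simpa [hρ_one, conv_apply_one, hcleft.map_one] using hcleft.expand 1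

theorem conv_apply_one_eq_one (hρ_one : ρ 1 = 1 ⊗ₜ[k] 1) (hcleft : IsPartiallyCleft ρ γ γ') :
    conv γ γ' 1 = 1 := by
  rw [conv_apply_one, hcleft.map_one, hcleft.map_one' hρ_one, one_mul]

theorem conv_conv_eq_self (hρ_one : ρ 1 = 1 ⊗ₜ[k] 1) (hcleft : IsPartiallyCleft ρ γ γ') :
    conv γ (conv γ' γ) = γ := by
  ext h
  let 𝓡 := Coalgebra.Repr.arbitrary k h
  have h7 := hcleft.seven 1 h Unit (H × H) Finset.univ 𝓡.index (fun _ => 1) (fun _ => 1)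
    𝓡.left 𝓡.right (by simp [Bialgebra.comul_one, Algebra.TensorProduct.one_def]) 𝓡.eq.symm
  simp only [one_mul, hcleft.conv_apply_one_eq_one hρ_one, Finset.univ_unique,
    Finset.sum_singleton] at h7
  rw [conv_eq_ofConv_mul, 𝓡.convMul_apply]
  exact h7

theorem conv_comm_of_coinvariant (hcleft : IsPartiallyCleft ρ γ γ') {T : H →ₗ[k] B}
    (hT : ∀ h, ρ (T h) = T h ⊗ₜ[k] 1) : conv (conv γ γ') T = conv T (conv γ γ') := by
  have hcentral := congrArg (· ∘ₗ TensorProduct.mk k H H 1)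
    (hcleft.conv_central (T ∘ₗ LinearMap.mul' k H) fun _ => hT _)
  simpa only [conv2_comp_mk_one, comp_mul'_comp_mk_one] using hcentral

end IsPartiallyCleft

theorem partiallyCleft_conv_identities_general
    {k H B : Type} [CommRing k] [Ring H] [HopfAlgebra k H]
    [Ring B] [Algebra k B]
    (ρ : B →ₗ[k] B ⊗[k] H)
    (hρ_one : ρ 1 = 1 ⊗ₜ[k] 1)
    (γ γ' : H →ₗ[k] B)
    (hcleft : IsPartiallyCleft ρ γ γ') :
    conv γ (conv γ' γ) = γ ∧
    conv (conv γ γ') (conv γ γ') = conv γ γ' ∧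
    conv (conv γ' γ) (conv γ' γ) = conv γ' γ ∧
    (∀ h : H, ρ (conv γ γ' h) = conv γ γ' h ⊗ₜ[k] 1) ∧
    (∀ T : H →ₗ[k] B, (∀ h : H, ρ (T h) = T h ⊗ₜ[k] 1) →
      conv (conv γ γ') T = conv T (conv γ γ')) := by
  have eq31 := hcleft.conv_conv_eq_self hρ_one
  have hregular : toConv γ * toConv γ' * toConv γ = toConv γ := by
    rw [mul_assoc]
    exact congrArg toConv eq31
  exact ⟨eq31, congrArg ofConv (IsIdempotentElem.mul_of_mul_mul_eq_left hregular),
    congrArg ofConv (IsIdempotentElem.mul_of_mul_mul_eq_right hregular),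
    hcleft.conv_coinv, fun _ => hcleft.conv_comm_of_coinvariant⟩

/-- For a partially cleft extension one has `γ * γ' * γ = γ` (equation (31));
consequently `γ * γ'` and `γ' * γ` are convolution idempotents, and `γ * γ'`
is a central idempotent in the convolution algebra `Hom(H, A)`,
`A = B^{co H}` (Remark 5.4). -/
theorem partiallyCleft_conv_identities
    {k H B : Type} [CommRing k] [Ring H] [HopfAlgebra k H]
    [Ring B] [Algebra k B]
    (ρ : B →ₗ[k] B ⊗[k] H)
    (hρ_one : ρ 1 = 1 ⊗ₜ[k] 1)
    (hρ_mul : ∀ x y : B, ρ (x * y) = ρ x * ρ y)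
    (hρ_coassoc : ∀ x : B,
      (TensorProduct.assoc k B H H) ((LinearMap.rTensor H ρ) (ρ x)) =
        (LinearMap.lTensor B (Coalgebra.comul (R := k))) (ρ x))
    (hρ_counit : ∀ x : B,
      (TensorProduct.rid k B)
        ((LinearMap.lTensor B (Coalgebra.counit (R := k))) (ρ x)) = x)
    (γ γ' : H →ₗ[k] B)
    (hcleft : IsPartiallyCleft ρ γ γ') :
    conv γ (conv γ' γ) = γ ∧
    conv (conv γ γ') (conv γ γ') = conv γ γ' ∧
    conv (conv γ' γ) (conv γ' γ) = conv γ' γ ∧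
    (∀ h : H, ρ (conv γ γ' h) = conv γ γ' h ⊗ₜ[k] 1) ∧
    (∀ T : H →ₗ[k] B, (∀ h : H, ρ (T h) = T h ⊗ₜ[k] 1) →
      conv (conv γ γ') T = conv T (conv γ γ')) :=
  partiallyCleft_conv_identities_general ρ hρ_one γ γ' hcleft
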